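/- Let X be a polyhedral normed space, f : X → X real analytic and nonexpansive, and let M(f) be the union of all minimal locked subsets of B_{X*}. If x, y ∈ Fix(f) satisfy φ(x) = φ(y) for all φ ∈ M(f), then x = y. -/

import Mathlib

/-- The duality map: `J z` is the set of dual-unit-ball functionals attaining the norm at `z`. -/
def dualityMap {X : Type*} [NormedAddCommGroup X] [NormedSpace ℝ X] (z : X) :
    Set (X →L[ℝ] ℝ) := {φ | ‖φ‖ ≤ 1 ∧ φ z = ‖z‖}

/-- `S_E(f)`: points where `f` preserves the value of every functional in `E`. -/
def SE {X : Type*} [NormedAddCommGroup X] [NormedSpace ℝ X]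
    (f : X → X) (E : Set (X →L[ℝ] ℝ)) : Set X :=
  {x | ∀ φ ∈ E, φ (f x) = φ x}

/-- `E` is locked for `f` if there are `v, w ∈ S_E(f)` with `J(v-w) = E`. -/
def Locked {X : Type*} [NormedAddCommGroup X] [NormedSpace ℝ X]
    (f : X → X) (E : Set (X →L[ℝ] ℝ)) : Prop :=
  ∃ v ∈ SE f E, ∃ w ∈ SE f E, dualityMap (v - w) = E

/-- `M(f)`: the union of all minimal locked subsets of the dual unit ball. -/
def MLocked {X : Type*} [NormedAddCommGroup X] [NormedSpace ℝ X]
    (f : X → X) : Set (X →L[ℝ] ℝ) :=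
  ⋃ E ∈ {E : Set (X →L[ℝ] ℝ) | E ⊆ {φ | ‖φ‖ ≤ 1} ∧ Locked f E ∧
    ∀ G ⊂ E, ¬ Locked f G}, E

/-!
Since `x` and `y` are fixed points, `J(x - y)` is locked. In a polyhedral space a duality-map
set is the closed convex hull of its extreme points, which are extreme points of the dual unit
ball; so there are only finitely many duality-map sets, hence finitely many locked sets, and
`J(x - y)` contains a minimal locked set `G`. Any `φ ∈ G ⊆ M(f)` satisfies
`‖x - y‖ = φ (x - y) = 0`.
-/

section DualityMap

variable {X : Type*} [NormedAddCommGroup X] [NormedSpace ℝ X]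

lemma setOf_norm_le_one_eq_closedBall :
    {φ : X →L[ℝ] ℝ | ‖φ‖ ≤ 1} = Metric.closedBall 0 1 := by
  ext φ
  simp

lemma dualityMap_nonempty (z : X) : (dualityMap z).Nonempty :=
  exists_dual_vector'' ℝ z

lemma dualityMap_subset_closedBall (z : X) : dualityMap z ⊆ {φ : X →L[ℝ] ℝ | ‖φ‖ ≤ 1} :=
  fun _ hφ => hφ.1

lemma apply_le_norm_of_norm_le_one {φ : X →L[ℝ] ℝ} (hφ : ‖φ‖ ≤ 1) (z : X) : φ z ≤ ‖z‖ :=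
  calc φ z ≤ ‖φ z‖ := le_abs_self _
    _ ≤ ‖φ‖ * ‖z‖ := φ.le_opNorm z
    _ ≤ ‖z‖ := mul_le_of_le_one_left (norm_nonneg z) hφ

lemma dualityMap_isExposed (z : X) :
    IsExposed ℝ {φ : X →L[ℝ] ℝ | ‖φ‖ ≤ 1} (dualityMap z) := by
  refine fun _ => ⟨ContinuousLinearMap.apply ℝ ℝ z, Set.ext fun φ => ?_⟩
  obtain ⟨g, hg, hgz⟩ := dualityMap_nonempty z
  simp only [dualityMap, ContinuousLinearMap.apply_apply, Set.mem_ofPred_eq]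
  refine ⟨fun ⟨hφ, hφz⟩ => ⟨hφ, fun ψ hψ => hφz ▸ apply_le_norm_of_norm_le_one hψ z⟩,
    fun ⟨hφ, hmax⟩ => ⟨hφ, ?_⟩⟩
  exact le_antisymm (apply_le_norm_of_norm_le_one hφ z) (hgz ▸ hmax g hg)

lemma convex_dualityMap (z : X) : Convex ℝ (dualityMap z) :=
  (dualityMap_isExposed z).convex
    (by rw [setOf_norm_le_one_eq_closedBall]; exact convex_closedBall 0 1)

lemma isCompact_dualityMap [FiniteDimensional ℝ X] (z : X) : IsCompact (dualityMap z) :=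
  (dualityMap_isExposed z).isCompact
    (by rw [setOf_norm_le_one_eq_closedBall]; exact isCompact_closedBall 0 1)

lemma extremePoints_dualityMap_subset (z : X) :
    (dualityMap z).extremePoints ℝ ⊆ Set.extremePoints ℝ {φ : X →L[ℝ] ℝ | ‖φ‖ ≤ 1} :=
  (dualityMap_isExposed z).isExtreme.extremePoints_subset_extremePoints

lemma finite_range_dualityMap [FiniteDimensional ℝ X]
    (hpoly : (Set.extremePoints ℝ {φ : X →L[ℝ] ℝ | ‖φ‖ ≤ 1}).Finite) :
    (Set.range (dualityMap (X := X))).Finite := by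
  refine Set.Finite.of_finite_image (f := fun E => E.extremePoints ℝ)
    (hpoly.finite_subsets.subset ?_) ?_
  · rintro _ ⟨_, ⟨z, rfl⟩, rfl⟩
    exact extremePoints_dualityMap_subset z
  · rintro _ ⟨z, rfl⟩ _ ⟨w, rfl⟩ hzw
    rw [← closure_convexHull_extremePoints (isCompact_dualityMap z) (convex_dualityMap z),
      ← closure_convexHull_extremePoints (isCompact_dualityMap w) (convex_dualityMap w)]
    exact congrArg (closure ∘ convexHull ℝ) hzw

end DualityMap

section Locked

variable {X : Type*} [NormedAddCommGroup X] [NormedSpace ℝ X] {f : X → X}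

lemma mem_SE_of_isFixedPt {x : X} (hx : Function.IsFixedPt f x) (E : Set (X →L[ℝ] ℝ)) :
    x ∈ SE f E :=
  fun φ _ => congrArg φ hx

lemma locked_dualityMap_sub_of_isFixedPt {x y : X} (hx : Function.IsFixedPt f x)
    (hy : Function.IsFixedPt f y) : Locked f (dualityMap (x - y)) :=
  ⟨x, mem_SE_of_isFixedPt hx _, y, mem_SE_of_isFixedPt hy _, rfl⟩

lemma Locked.mem_range_dualityMap {E : Set (X →L[ℝ] ℝ)} (hE : Locked f E) :
    E ∈ Set.range (dualityMap (X := X)) := by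
  obtain ⟨v, -, w, -, rfl⟩ := hE
  exact ⟨v - w, rfl⟩

lemma Locked.nonempty {E : Set (X →L[ℝ] ℝ)} (hE : Locked f E) : E.Nonempty := by
  obtain ⟨z, rfl⟩ := hE.mem_range_dualityMap
  exact dualityMap_nonempty z

lemma subset_MLocked {G : Set (X →L[ℝ] ℝ)} (hG : Minimal (Locked f) G) : G ⊆ MLocked f := by
  obtain ⟨z, rfl⟩ := hG.prop.mem_range_dualityMap
  exact Set.subset_biUnion_of_mem (u := id)
    ⟨dualityMap_subset_closedBall z, hG.prop, fun _ hH => hG.not_prop_of_lt hH⟩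

lemma Locked.exists_minimal_subset [FiniteDimensional ℝ X]
    (hpoly : (Set.extremePoints ℝ {φ : X →L[ℝ] ℝ | ‖φ‖ ≤ 1}).Finite)
    {E : Set (X →L[ℝ] ℝ)} (hE : Locked f E) : ∃ G ⊆ E, Minimal (Locked f) G :=
  ((finite_range_dualityMap hpoly).subset fun _ hG => Locked.mem_range_dualityMap hG).isPWO
    |>.exists_le_minimal (s := {G | Locked f G}) hE

end Locked

theorem stmt_8_general {X : Type*} [NormedAddCommGroup X] [NormedSpace ℝ X]
    [FiniteDimensional ℝ X]
    (hpoly : (Set.extremePoints ℝ {φ : X →L[ℝ] ℝ | ‖φ‖ ≤ 1}).Finite)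
    (f : X → X)
    (x y : X) (hx : f x = x) (hy : f y = y)
    (h : ∀ φ ∈ MLocked f, φ x = φ y) :
    x = y := by
  obtain ⟨G, hGJ, hG⟩ := (locked_dualityMap_sub_of_isFixedPt hx hy).exists_minimal_subset hpoly
  obtain ⟨φ, hφG⟩ := hG.prop.nonempty
  have hφ : φ (x - y) = ‖x - y‖ := (hGJ hφG).2
  rw [map_sub, h φ (subset_MLocked hG hφG), sub_self] at hφ
  rw [← sub_eq_zero, ← norm_eq_zero, ← hφ]

theorem stmt_8 {X : Type*} [NormedAddCommGroup X] [NormedSpace ℝ X]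
    [FiniteDimensional ℝ X]
    (hpoly : (Set.extremePoints ℝ {φ : X →L[ℝ] ℝ | ‖φ‖ ≤ 1}).Finite)
    (f : X → X) (hf_an : ∀ x : X, AnalyticAt ℝ f x)
    (hf : ∀ u v : X, ‖f u - f v‖ ≤ ‖u - v‖)
    (x y : X) (hx : f x = x) (hy : f y = y)
    (h : ∀ φ ∈ MLocked f, φ x = φ y) :
    x = y :=
  stmt_8_general hpoly f x y hx hy h
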